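/- Let C be an additive category that admits kernels. Then the sequential completion Ĉ admits kernels, and the canonical functor C → Ĉ is left exact (it preserves kernels). Moreover, the kernel in Ĉ of a morphism represented by a morphism φ : X → Y of Cauchy sequences is the Cauchy sequence (Ker φ_i)_{i≥0} of levelwise kernels. -/

import Mathlib

/-!
STATEMENT 7: If `C` is an additive category with kernels, then the sequential completion
`Ĉ` admits kernels, the canonical functor `C ⥤ Ĉ` is left exact (preserves kernels), and
the kernel in `Ĉ` of a morphism represented by a morphism `φ : X ⟶ Y` of Cauchy sequences
is the Cauchy sequence `(Ker φᵢ)` of levelwise kernels.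
-/

open CategoryTheory CategoryTheory.Limits

universe v u

namespace SeqCompletion

def IsCauchy {C : Type u} [Category.{v} C] (X : ℕ ⥤ C) : Prop :=
  ∀ C' : C, ∃ n : ℕ, ∀ (i j : ℕ), n ≤ i → ∀ (hij : i ≤ j),
    Function.Bijective (fun g : C' ⟶ X.obj i => g ≫ X.map (homOfLE hij))

variable (C : Type u) [Category.{v} C]

abbrev CauchCat := ObjectProperty.FullSubcategory (fun X : ℕ ⥤ C => IsCauchy X)

def evtInv : MorphismProperty (CauchCat C) := fun X _Y φ =>
  ∀ C' : C, ∃ n : ℕ, ∀ i : ℕ, n ≤ i →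
    Function.Bijective (fun g : C' ⟶ X.obj.obj i =>
      g ≫ ((ObjectProperty.ι _).map φ).app i)

/-- The sequential completion `Ĉ = Cauch(ℕ, C)[S⁻¹]`. -/
abbrev Shat := (evtInv C).Localization

/-- The functor `C ⥤ Cauch(ℕ, C)` sending an object to the constant sequence. -/
def constCauchy : C ⥤ CauchCat C :=
  ObjectProperty.lift _ (Functor.const ℕ) (fun X C' =>
    ⟨0, fun i j _ hij => by
      simp only [Functor.const_obj_obj, Functor.const_obj_map, Category.comp_id]
      exact Function.bijective_id⟩)

variable {C}

/-- The levelwise kernel sequence of a morphism of sequences. -/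
noncomputable def kernelSeq [Preadditive C] [HasKernels C] {X Y : ℕ ⥤ C} (φ : X ⟶ Y) :
    ℕ ⥤ C where
  obj i := kernel (φ.app i)
  map {i j} f := kernel.map (φ.app i) (φ.app j) (X.map f) (Y.map f) (φ.naturality f).symm
  map_id i := by
    apply equalizer.hom_ext
    simp
  map_comp f g := by
    apply equalizer.hom_ext
    simp


/-! ### Infrastructure -/

/-- monotone envelope -/
def env (f : ℕ → ℕ) : ℕ → ℕ
  | 0 => max 0 (f 0)
  | n + 1 => max (env f n) (max (n + 1) (f (n + 1)))

lemma env_mono (f : ℕ → ℕ) : Monotone (env f) :=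
  monotone_nat_of_le_succ (fun n => le_max_left _ _)

lemma le_env (f : ℕ → ℕ) (i : ℕ) : i ≤ env f i := by
  cases i <;> simp [env] <;> omega

lemma apply_le_env (f : ℕ → ℕ) (i : ℕ) : f i ≤ env f i := by
  cases i <;> simp [env] <;> omega

abbrev ob (X : CauchCat C) (i : ℕ) : C := X.obj.obj i

/-- transition maps -/
abbrev tr (X : CauchCat C) {i j : ℕ} (h : i ≤ j) : ob X i ⟶ ob X j :=
  X.obj.map (homOfLE h)

abbrev app {X Y : CauchCat C} (φ : X ⟶ Y) (i : ℕ) : ob X i ⟶ ob Y i :=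
  NatTrans.app φ.hom i

lemma app_comp {X Y Z : CauchCat C} (φ : X ⟶ Y) (ψ : Y ⟶ Z) (i : ℕ) :
    app (φ ≫ ψ) i = app φ i ≫ app ψ i := rfl

lemma hom_ext {X Y : CauchCat C} {f g : X ⟶ Y}
    (h : ∀ i, app f i = app g i) : f = g := ObjectProperty.hom_ext _ (NatTrans.ext (funext h))

lemma app_nat {X Y : CauchCat C} (φ : X ⟶ Y) {i j : ℕ} (h : i ≤ j) :
    tr X h ≫ app φ j = app φ i ≫ tr Y h :=
  NatTrans.naturality φ.hom (homOfLE h)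

lemma app_nat_assoc {X Y : CauchCat C} (φ : X ⟶ Y) {i j : ℕ} (h : i ≤ j)
    {Z' : C} (g : ob Y j ⟶ Z') :
    tr X h ≫ app φ j ≫ g = app φ i ≫ tr Y h ≫ g := by
  rw [← Category.assoc, app_nat, Category.assoc]

lemma tr_tr (X : CauchCat C) {i j k : ℕ} (h : i ≤ j) (h' : j ≤ k) :
    tr X h ≫ tr X h' = tr X (h.trans h') := by
  rw [← Functor.map_comp, homOfLE_comp]

lemma evtInv_iff {X Y : CauchCat C} (φ : X ⟶ Y) :
    evtInv C φ ↔ ∀ C' : C, ∃ n : ℕ, ∀ i : ℕ, n ≤ i →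
      Function.Bijective (fun g : C' ⟶ ob X i => g ≫ app φ i) := Iff.rfl

lemma cauchy_bij (X : CauchCat C) (C' : C) :
    ∃ n : ℕ, ∀ (i j : ℕ), n ≤ i → ∀ (hij : i ≤ j),
      Function.Bijective (fun g : C' ⟶ ob X i => g ≫ tr X hij) :=
  X.property C'

/-! ### Reindexing -/

structure Idx where
  j : ℕ → ℕ
  mono : Monotone j
  le : ∀ i, i ≤ j i

def Idx.ofFun (f : ℕ → ℕ) : Idx := ⟨env f, env_mono f, le_env f⟩

lemma Idx.ofFun_le (f : ℕ → ℕ) (i : ℕ) : f i ≤ (Idx.ofFun f).j i := apply_le_env f i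

def re (X : CauchCat C) (J : Idx) : CauchCat C :=
  ⟨J.mono.functor ⋙ X.obj, fun C' => by
    obtain ⟨n, hn⟩ := X.property C'
    exact ⟨n, fun i i' h1 h2 => hn (J.j i) (J.j i') (h1.trans (J.le i)) (J.mono h2)⟩⟩

lemma ob_re (X : CauchCat C) (J : Idx) (i : ℕ) : ob (re X J) i = ob X (J.j i) := rfl

lemma re_map (X : CauchCat C) (J : Idx) {i i' : ℕ} (h : i ≤ i') :
    tr (re X J) h = tr X (J.mono h) := rfl

def tau (X : CauchCat C) (J : Idx) : X ⟶ re X J :=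
  ObjectProperty.homMk (show X.obj ⟶ J.mono.functor ⋙ X.obj from
  { app := fun i => tr X (J.le i)
    naturality := fun i i' f => by
      dsimp
      erw [← Functor.map_comp, ← Functor.map_comp]
      congr 1 })

lemma app_tau (X : CauchCat C) (J : Idx) (i : ℕ) :
    app (tau X J) i = tr X (J.le i) := rfl

def wh {X Y : CauchCat C} (φ : X ⟶ Y) (J : Idx) : re X J ⟶ re Y J :=
  ObjectProperty.homMk (show J.mono.functor ⋙ X.obj ⟶ J.mono.functor ⋙ Y.obj from
    Functor.whiskerLeft J.mono.functor φ.hom)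

lemma app_wh {X Y : CauchCat C} (φ : X ⟶ Y) (J : Idx) (i : ℕ) :
    app (wh φ J) i = app φ (J.j i) := rfl

lemma tau_mem (X : CauchCat C) (J : Idx) : evtInv C (tau X J) := fun C' => by
  obtain ⟨n, hn⟩ := X.property C'
  exact ⟨n, fun i hi => hn i (J.j i) hi (J.le i)⟩

lemma tau_comm {X Y : CauchCat C} (φ : X ⟶ Y) (J : Idx) :
    φ ≫ tau Y J = tau X J ≫ wh φ J :=
  hom_ext (fun i => (app_nat φ (J.le i)).symm)

/-! ### Eventual inverses -/

lemma exists_inv {X Y : CauchCat C} (s : X ⟶ Y) (hs : evtInv C s) :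
    ∃ (J : Idx) (t : Y ⟶ re X J),
      s ≫ t = tau X J ∧ t ≫ wh s J = tau Y J := by
  choose n hn using hs
  have hnX : ∀ i, n (ob X i) ≤ (Idx.ofFun (fun i => max (n (ob X i)) (n (ob Y i)))).j i :=
    fun i => le_trans (le_max_left (n (ob X i)) (n (ob Y i)))
      (Idx.ofFun_le (fun i => max (n (ob X i)) (n (ob Y i))) i)
  have hnY : ∀ i, n (ob Y i) ≤ (Idx.ofFun (fun i => max (n (ob X i)) (n (ob Y i)))).j i :=
    fun i => le_trans (le_max_right (n (ob X i)) (n (ob Y i)))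
      (Idx.ofFun_le (fun i => max (n (ob X i)) (n (ob Y i))) i)
  set J : Idx := Idx.ofFun (fun i => max (n (ob X i)) (n (ob Y i))) with hJ
  have cancel : ∀ (A : C) (m : ℕ), n A ≤ m → ∀ {g₁ g₂ : A ⟶ ob X m},
      g₁ ≫ app s m = g₂ ≫ app s m → g₁ = g₂ := fun A m hm g₁ g₂ h =>
    (hn A m hm).injective h
  -- componentwise inverse
  set e : ∀ i, (ob Y i ⟶ ob X (J.j i)) ≃ (ob Y i ⟶ ob Y (J.j i)) :=
    fun i => Equiv.ofBijective _ (hn (ob Y i) (J.j i) (hnY i)) with he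
  have he' : ∀ i (g : ob Y i ⟶ ob X (J.j i)), e i g = g ≫ app s (J.j i) := fun _ _ => rfl
  set tapp : ∀ i, ob Y i ⟶ ob X (J.j i) := fun i => (e i).symm (tr Y (J.le i)) with ht
  have hts : ∀ i, tapp i ≫ app s (J.j i) = tr Y (J.le i) := by
    intro i
    rw [← he']
    exact (e i).apply_symm_apply _
  have tnat : ∀ (i i' : ℕ) (h : i ≤ i'),
      tapp i ≫ tr X (J.mono h) = tr Y h ≫ tapp i' := by
    intro i i' h
    apply cancel (ob Y i) (J.j i') (le_trans (hnY i) (J.mono h))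
    rw [Category.assoc, Category.assoc, hts i', app_nat s (J.mono h),
      ← Category.assoc, hts i, tr_tr, tr_tr]
  refine ⟨J, ObjectProperty.homMk (show Y.obj ⟶ J.mono.functor ⋙ X.obj from
      { app := tapp
        naturality := fun i i' f => (tnat i i' (leOfHom f)).symm }), ?_, ?_⟩
  · apply hom_ext
    intro i
    apply cancel (ob X i) (J.j i) (hnX i)
    erw [app_comp, Category.assoc]
    show app s i ≫ tapp i ≫ app s (J.j i) = tr X (J.le i) ≫ app s (J.j i)
    rw [hts i, app_nat s (J.le i)]
  · exact hom_ext (fun i => hts i)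

/-! ### Calculus of fractions -/

instance : (evtInv C).IsMultiplicative where
  id_mem X := fun C' =>
    ⟨0, fun i _ => by
      show Function.Bijective (fun g : C' ⟶ ob X i => g ≫ app (𝟙 X) i)
      have : (fun g : C' ⟶ ob X i => g ≫ app (𝟙 X) i) = id := by
        funext g
        show g ≫ 𝟙 _ = g
        simp
      rw [this]
      exact Function.bijective_id⟩
  comp_mem f g hf hg := fun C' => by
    obtain ⟨m, hm⟩ := hf C'
    obtain ⟨k, hk⟩ := hg C'
    refine ⟨max m k, fun i hi => ?_⟩
    show Function.Bijective (fun h : C' ⟶ ob _ i => h ≫ app (f ≫ g) i)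
    have : (fun h : C' ⟶ _ => h ≫ app (f ≫ g) i) =
        (fun h => h ≫ app g i) ∘ (fun h => h ≫ app f i) := by
      funext h
      show h ≫ (app f i ≫ app g i) = (h ≫ app f i) ≫ app g i
      simp
    rw [this]
    exact (hk i (le_trans (le_max_right _ _) hi)).comp (hm i (le_trans (le_max_left _ _) hi))

instance : (evtInv C).HasLeftCalculusOfFractions where
  exists_leftFraction X Y φ := by
    obtain ⟨X', s, hs, f, rfl⟩ := φ.cases
    obtain ⟨J, t, h1, h2⟩ := exists_inv s hs
    refine ⟨MorphismProperty.LeftFraction.mk (t ≫ wh f J) (tau Y J) (tau_mem Y J), ?_⟩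
    dsimp
    rw [tau_comm f J, ← Category.assoc, h1]
  ext X' X Y f₁ f₂ s hs h := by
    obtain ⟨J, t, h1, h2⟩ := exists_inv s hs
    refine ⟨re Y J, tau Y J, tau_mem Y J, ?_⟩
    apply hom_ext
    intro i
    erw [app_comp, app_comp, app_tau, ← app_nat f₁ (J.le i), ← app_nat f₂ (J.le i)]
    have h2i : app t i ≫ app s (J.j i) = tr X (J.le i) := congrArg (fun ψ => app ψ i) h2
    erw [← h2i, Category.assoc, Category.assoc]
    show app t i ≫ app (s ≫ f₁) (J.j i) = app t i ≫ app (s ≫ f₂) (J.j i)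
    rw [h]

/-! ### Preadditivity -/

instance [Preadditive C] : Preadditive (CauchCat C) := Preadditive.fullSubcategory _

noncomputable example [Preadditive C] : Preadditive (Shat C) := inferInstance
example [Preadditive C] : (evtInv C).Q.Additive := inferInstance

lemma app_zero [Preadditive C] {X Y : CauchCat C} (i : ℕ) :
    app (0 : X ⟶ Y) i = 0 := rfl

/-! ### Localization lemmas -/

lemma isIso_Q {X Y : CauchCat C} (s : X ⟶ Y) (hs : evtInv C s) :
    IsIso ((evtInv C).Q.map s) :=
  Localization.inverts _ (evtInv C) s hs

/-- The image in the completion of the transition morphism `X ⟶ re X J`, as an iso. -/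
noncomputable def tauIso (X : CauchCat C) (J : Idx) :
    (evtInv C).Q.obj X ≅ (evtInv C).Q.obj (re X J) :=
  haveI := isIso_Q (tau X J) (tau_mem X J)
  asIso ((evtInv C).Q.map (tau X J))

lemma tauIso_hom (X : CauchCat C) (J : Idx) :
    (tauIso X J).hom = (evtInv C).Q.map (tau X J) := rfl

lemma inv_tau_comm {X Y : CauchCat C} (u : X ⟶ Y) (J : Idx) :
    (tauIso X J).inv ≫ (evtInv C).Q.map u =
      (evtInv C).Q.map (wh u J) ≫ (tauIso Y J).inv := by
  rw [Iso.inv_comp_eq, ← Category.assoc, Iso.eq_comp_inv, tauIso_hom, tauIso_hom,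
    ← Functor.map_comp, ← Functor.map_comp, tau_comm u J]

lemma inv_tau_comm_assoc {X Y : CauchCat C} (u : X ⟶ Y) (J : Idx) {Z' : (evtInv C).Localization}
    (h : (evtInv C).Q.obj Y ⟶ Z') :
    (tauIso X J).inv ≫ (evtInv C).Q.map u ≫ h =
      (evtInv C).Q.map (wh u J) ≫ (tauIso Y J).inv ≫ h := by
  rw [← Category.assoc, inv_tau_comm, Category.assoc]

lemma exists_normal_form₂ {T₀ X : CauchCat C}
    (g₁ g₂ : (evtInv C).Q.obj T₀ ⟶ (evtInv C).Q.obj X) :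
    ∃ (J : Idx) (b₁ b₂ : T₀ ⟶ re X J),
      g₁ = (evtInv C).Q.map b₁ ≫ (tauIso X J).inv ∧
      g₂ = (evtInv C).Q.map b₂ ≫ (tauIso X J).inv := by
  obtain ⟨ψ, hg₁, hg₂⟩ := Localization.exists_leftFraction₂ (evtInv C).Q (evtInv C) g₁ g₂
  obtain ⟨J, t, h1, h2⟩ := exists_inv ψ.s ψ.hs
  haveI := isIso_Q ψ.s ψ.hs
  refine ⟨J, ψ.f ≫ t, ψ.f' ≫ t, ?_, ?_⟩
  · rw [hg₁, Iso.eq_comp_inv, tauIso_hom, show tau X J = ψ.s ≫ t from h1.symm,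
      Functor.map_comp, Functor.map_comp, ← Category.assoc]
    congr 1
    exact ψ.fst.map_comp_map_s _ _
  · rw [hg₂, Iso.eq_comp_inv, tauIso_hom, show tau X J = ψ.s ≫ t from h1.symm,
      Functor.map_comp, Functor.map_comp, ← Category.assoc]
    congr 1
    exact ψ.snd.map_comp_map_s _ _

lemma exists_normal_form {T₀ X : CauchCat C}
    (g : (evtInv C).Q.obj T₀ ⟶ (evtInv C).Q.obj X) :
    ∃ (J : Idx) (b : T₀ ⟶ re X J),
      g = (evtInv C).Q.map b ≫ (tauIso X J).inv := by
  obtain ⟨J, b₁, _, h1, _⟩ := exists_normal_form₂ g g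
  exact ⟨J, b₁, h1⟩

/-- Levelwise monomorphisms become monomorphisms in the completion. -/
lemma mono_Q_map {A B : CauchCat C} (u : A ⟶ B) (hu : ∀ i, Mono (app u i)) :
    Mono ((evtInv C).Q.map u) := by
  constructor
  intro T g₁ g₂ hyp
  haveI : (evtInv C).Q.EssSurj := Localization.essSurj _ (evtInv C)
  set T₀ := (evtInv C).Q.objPreimage T with hT₀
  set e : (evtInv C).Q.obj T₀ ≅ T := (evtInv C).Q.objObjPreimageIso T with he
  suffices h : e.hom ≫ g₁ = e.hom ≫ g₂ by
    rwa [cancel_epi e.hom] at h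
  obtain ⟨J, b₁, b₂, h1, h2⟩ := exists_normal_form₂ (e.hom ≫ g₁) (e.hom ≫ g₂)
  rw [h1, h2]
  have hc : (evtInv C).Q.map (b₁ ≫ wh u J) = (evtInv C).Q.map (b₂ ≫ wh u J) := by
    have hc0 : ((evtInv C).Q.map b₁ ≫ (tauIso A J).inv) ≫ (evtInv C).Q.map u =
        ((evtInv C).Q.map b₂ ≫ (tauIso A J).inv) ≫ (evtInv C).Q.map u := by
      rw [← h1, ← h2, Category.assoc, Category.assoc, hyp]
    simp only [Category.assoc, inv_tau_comm u J] at hc0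
    have hc1 := congrArg (fun z => z ≫ (tauIso B J).hom) hc0
    simpa only [Category.assoc, Iso.inv_hom_id, Category.comp_id, ← Functor.map_comp]
      using hc1
  obtain ⟨Z, w, hw, hfac⟩ :=
    (MorphismProperty.map_eq_iff_postcomp (evtInv C).Q (evtInv C) _ _).1 hc
  choose nw hnw using hw
  obtain ⟨R, hR⟩ : ∃ R : Idx, ∀ i, nw (ob T₀ i) ≤ R.j i :=
    ⟨Idx.ofFun (fun i => nw (ob T₀ i)), Idx.ofFun_le _⟩
  have key : b₁ ≫ tau (re A J) R = b₂ ≫ tau (re A J) R := by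
    apply hom_ext
    intro i
    rw [app_comp, app_comp, app_tau]
    haveI hm : Mono (app (wh u J) (R.j i)) := hu _
    erw [← cancel_mono (app (wh u J) (R.j i))]
    apply (hnw (ob T₀ i) (R.j i) (hR i)).injective
    show _ ≫ app w (R.j i) = _ ≫ app w (R.j i)
    have h₁ := congrArg (fun ψ => app ψ i ≫ tr Z (R.le i)) hfac
    simp only [app_comp, Category.assoc] at h₁ ⊢
    erw [Category.assoc, Category.assoc, Category.assoc, Category.assoc]
    erw [app_nat_assoc (wh u J) (R.le i), app_nat w (R.le i)]
    exact h₁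
  have hb : (evtInv C).Q.map b₁ = (evtInv C).Q.map b₂ := by
    have h₂ := congrArg (fun z => (evtInv C).Q.map z ≫ (tauIso (re A J) R).inv) key
    simpa only [Functor.map_comp, ← tauIso_hom, Category.assoc, Iso.hom_inv_id,
      Category.comp_id] using h₂
  rw [hb]

section Kernels

variable [Preadditive C] [HasKernels C]


/-- the natural transformation of `φ : X ⟶ Y` in `CauchCat C` seen at the level
of the underlying functors -/
abbrev nt {X Y : CauchCat C} (φ : X ⟶ Y) : X.obj ⟶ Y.obj :=
  (ObjectProperty.ι _).map φ

lemma kernelSeq_isCauchy {X Y : CauchCat C} (φ : X ⟶ Y) :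
    IsCauchy (kernelSeq (nt φ)) := by
  intro C'
  obtain ⟨nX, hnX⟩ := X.property C'
  obtain ⟨nY, hnY⟩ := Y.property C'
  refine ⟨max nX nY, fun i j hi hij => ?_⟩
  have hiX : nX ≤ i := le_trans (le_max_left _ _) hi
  have hiY : nY ≤ i := le_trans (le_max_right _ _) hi
  constructor
  · intro g₁ g₂ h
    have h' := congrArg (fun z => z ≫ kernel.ι ((nt φ).app j)) h
    have hm : (kernelSeq (nt φ)).map (homOfLE hij) ≫ kernel.ι ((nt φ).app j) =
        kernel.ι ((nt φ).app i) ≫ tr X hij := by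
      dsimp [kernelSeq]
      simp
    have hm' : ∀ g : C' ⟶ (kernelSeq (nt φ)).obj i,
        (g ≫ kernel.ι ((nt φ).app i)) ≫ X.obj.map (homOfLE hij) =
          (g ≫ (kernelSeq (nt φ)).map (homOfLE hij)) ≫ kernel.ι ((nt φ).app j) := fun g =>
      (Category.assoc _ _ _).trans ((congrArg (fun z => g ≫ z) hm.symm).trans
        (Category.assoc _ _ _).symm)
    replace h' := (hm' g₁).trans (h'.trans (hm' g₂).symm)
    have h'' := (hnX i j hiX hij).injective h'
    exact (cancel_mono (kernel.ι ((nt φ).app i))).1 h''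
  · intro h
    obtain ⟨u₀, hu₀⟩ := (hnX i j hiX hij).surjective (h ≫ kernel.ι ((nt φ).app j))
    dsimp at hu₀
    have hz : u₀ ≫ (nt φ).app i = 0 := by
      apply (hnY i j hiY hij).injective
      show (u₀ ≫ (nt φ).app i) ≫ Y.obj.map (homOfLE hij) = 0 ≫ Y.obj.map (homOfLE hij)
      erw [Category.assoc, ← (nt φ).naturality (homOfLE hij), ← Category.assoc, hu₀,
        Category.assoc]
      show h ≫ kernel.ι (NatTrans.app φ.hom j) ≫ NatTrans.app φ.hom j = 0 ≫ Y.obj.map (homOfLE hij)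
      erw [kernel.condition, comp_zero, zero_comp]
    refine ⟨kernel.lift _ u₀ hz, ?_⟩
    show kernel.lift _ u₀ hz ≫ (kernelSeq (nt φ)).map (homOfLE hij) = h
    apply (cancel_mono (kernel.ι ((nt φ).app j))).1
    dsimp [kernelSeq]
    simp only [Category.assoc, kernel.lift_ι]
    rw [← Category.assoc, kernel.lift_ι, hu₀]
    rfl

/-- The kernel object in `CauchCat C`. -/
noncomputable def Kob {X Y : CauchCat C} (φ : X ⟶ Y) : CauchCat C :=
  ⟨kernelSeq (nt φ), kernelSeq_isCauchy φ⟩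

/-- The inclusion of the levelwise kernel. -/
noncomputable def kι {X Y : CauchCat C} (φ : X ⟶ Y) : Kob φ ⟶ X :=
  ObjectProperty.homMk (show (Kob φ).obj ⟶ X.obj from
  { app := fun i => kernel.ι ((nt φ).app i)
    naturality := fun i i' f => by
      dsimp [Kob, kernelSeq]
      simp })

lemma app_kι {X Y : CauchCat C} (φ : X ⟶ Y) (i : ℕ) :
    app (kι φ) i = kernel.ι ((nt φ).app i) := rfl

lemma kι_mono {X Y : CauchCat C} (φ : X ⟶ Y) (i : ℕ) : Mono (app (kι φ) i) :=
  inferInstanceAs (Mono (kernel.ι _))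

lemma kι_comp {X Y : CauchCat C} (φ : X ⟶ Y) : kι φ ≫ φ = 0 :=
  hom_ext (fun i => kernel.condition _)

lemma kernelSeq_map_ι {X Y : CauchCat C} (φ : X ⟶ Y) {i j : ℕ} (h : i ≤ j) :
    (kernelSeq (nt φ)).map (homOfLE h) ≫ kernel.ι ((nt φ).app j) =
      kernel.ι ((nt φ).app i) ≫ tr X h := by
  dsimp [kernelSeq]
  simp

lemma Q_kι_comp {X Y : CauchCat C} (φ : X ⟶ Y) :
    (evtInv C).Q.map (kι φ) ≫ (evtInv C).Q.map φ = 0 := by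
  rw [← Functor.map_comp, kι_comp, Functor.map_zero]

lemma exists_lift {X Y : CauchCat C} (φ : X ⟶ Y) {T : (evtInv C).Localization}
    (g : T ⟶ (evtInv C).Q.obj X) (hg : g ≫ (evtInv C).Q.map φ = 0) :
    ∃ l : T ⟶ (evtInv C).Q.obj (Kob φ), l ≫ (evtInv C).Q.map (kι φ) = g := by
  haveI : (evtInv C).Q.EssSurj := Localization.essSurj _ (evtInv C)
  set T₀ := (evtInv C).Q.objPreimage T with hT₀
  set e : (evtInv C).Q.obj T₀ ≅ T := (evtInv C).Q.objObjPreimageIso T with he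
  suffices h : ∃ l₀ : (evtInv C).Q.obj T₀ ⟶ (evtInv C).Q.obj (Kob φ),
      l₀ ≫ (evtInv C).Q.map (kι φ) = e.hom ≫ g by
    obtain ⟨l₀, hl₀⟩ := h
    exact ⟨e.inv ≫ l₀, by rw [Category.assoc, hl₀, Iso.inv_hom_id_assoc]⟩
  obtain ⟨J, b, hb⟩ := exists_normal_form (e.hom ≫ g)
  have hc : (evtInv C).Q.map (b ≫ wh φ J) = (evtInv C).Q.map (0 : T₀ ⟶ re Y J) := by
    have h0 : ((evtInv C).Q.map b ≫ (tauIso X J).inv) ≫ (evtInv C).Q.map φ = 0 := by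
      rw [← hb, Category.assoc, hg, comp_zero]
    rw [Category.assoc, inv_tau_comm φ J, ← Category.assoc] at h0
    have h1 := congrArg (fun z => z ≫ (tauIso Y J).hom) h0
    simp only [Category.assoc, Iso.inv_hom_id, Category.comp_id, zero_comp] at h1
    rw [Functor.map_zero]
    simpa only [← Functor.map_comp] using h1
  obtain ⟨Z, w, hw, hfac⟩ :=
    (MorphismProperty.map_eq_iff_postcomp (evtInv C).Q (evtInv C) _ _).1 hc
  rw [zero_comp] at hfac
  choose nw hnw using hw
  obtain ⟨R, hR⟩ : ∃ R : Idx, ∀ i, nw (ob T₀ i) ≤ R.j i :=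
    ⟨Idx.ofFun (fun i => nw (ob T₀ i)), Idx.ofFun_le _⟩
  set c : T₀ ⟶ re (re X J) R := b ≫ tau (re X J) R with hcdef
  have hz : ∀ i, app c i ≫ app (wh (wh φ J) R) i = 0 := by
    intro i
    apply (hnw (ob T₀ i) (R.j i) (hR i)).injective
    show (app c i ≫ app (wh (wh φ J) R) i) ≫ app w (R.j i) = 0 ≫ app w (R.j i)
    rw [zero_comp, hcdef]
    have h₁ := congrArg (fun ψ => app ψ i ≫ tr Z (R.le i)) hfac
    simp only [app_comp, Category.assoc, app_zero, zero_comp] at h₁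
    simp only [app_comp, app_tau, app_wh, Category.assoc]
    erw [Category.assoc, Category.assoc]
    erw [show SeqCompletion.app φ (J.j (R.j i)) = app (wh φ J) (R.j i) from rfl,
      app_nat_assoc (wh φ J) (R.le i), app_nat w (R.le i)]
    exact h₁
  set ℓ : T₀ ⟶ re (re (Kob φ) J) R :=
    ObjectProperty.homMk (show T₀.obj ⟶ (re (re (Kob φ) J) R).obj from
    { app := fun i => kernel.lift ((nt φ).app (J.j (R.j i))) (app c i) (hz i)
      naturality := fun i i' f => by
        apply (cancel_mono (kernel.ι ((nt φ).app (J.j (R.j i'))))).1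
        refine (Category.assoc _ _ _).trans ((congrArg (fun z => _ ≫ z)
          (kernel.lift_ι ((nt φ).app (J.j (R.j i'))) _ _)).trans ?_)
        show _ = (_ ≫ (kernelSeq (nt φ)).map (homOfLE (J.mono (R.mono (leOfHom f))))) ≫
          kernel.ι ((nt φ).app (J.j (R.j i')))
        refine Eq.trans ?_ (Category.assoc _ _ _).symm
        refine Eq.trans ?_ (congrArg (fun z => _ ≫ z) (kernelSeq_map_ι φ (J.mono (R.mono (leOfHom f))))).symm
        refine Eq.trans ?_ (Category.assoc _ _ _)
        refine Eq.trans ?_ (congrArg (fun z => z ≫ _) (kernel.lift_ι ((nt φ).app (J.j (R.j i))) _ _)).symm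
        exact NatTrans.naturality c.hom f }) with hℓ
  have hℓι : ℓ ≫ wh (wh (kι φ) J) R = c :=
    hom_ext (fun i => kernel.lift_ι ((nt φ).app (J.j (R.j i))) (app c i) (hz i))
  refine ⟨(evtInv C).Q.map ℓ ≫ (tauIso (re (Kob φ) J) R).inv ≫ (tauIso (Kob φ) J).inv, ?_⟩
  rw [hb]
  simp only [Category.assoc]
  rw [inv_tau_comm (kι φ) J, inv_tau_comm_assoc (wh (kι φ) J) R,
    ← Functor.map_comp_assoc, hℓι, hcdef, Functor.map_comp_assoc, ← tauIso_hom,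
    Iso.hom_inv_id_assoc]

/-- The kernel fork in the completion is a limit. -/
noncomputable def kernelForkIsLimit {X Y : CauchCat C} (φ : X ⟶ Y) :
    IsLimit (KernelFork.ofι ((evtInv C).Q.map (kι φ)) (Q_kι_comp φ)) := by
  haveI := mono_Q_map (kι φ) (kι_mono φ)
  exact KernelFork.IsLimit.ofι _ _
    (fun {W'} g hg => (exists_lift φ g hg).choose)
    (fun {W'} g hg => (exists_lift φ g hg).choose_spec)
    (fun {W'} g hg m hm => by
      rw [← cancel_mono ((evtInv C).Q.map (kι φ)), hm, (exists_lift φ g hg).choose_spec])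

lemma hasKernel_Q_map {X Y : CauchCat C} (φ : X ⟶ Y) :
    HasKernel ((evtInv C).Q.map φ) :=
  ⟨⟨⟨_, kernelForkIsLimit φ⟩⟩⟩

instance : HasKernels (Shat C) := by
  constructor
  intro P R f
  haveI : (evtInv C).Q.EssSurj := Localization.essSurj _ (evtInv C)
  set eP : (evtInv C).Q.obj ((evtInv C).Q.objPreimage P) ≅ P :=
    (evtInv C).Q.objObjPreimageIso P with heP
  set eR : (evtInv C).Q.obj ((evtInv C).Q.objPreimage R) ≅ R :=
    (evtInv C).Q.objObjPreimageIso R with heR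
  obtain ⟨J, b, hb⟩ := exists_normal_form (eP.hom ≫ f ≫ eR.inv)
  have hf : eP.inv ≫ (eP.hom ≫ f ≫ eR.inv) ≫ eR.hom = f := by simp
  rw [hb] at hf
  rw [← hf]
  haveI : HasKernel ((evtInv C).Q.map b) := hasKernel_Q_map b
  haveI : Mono ((tauIso ((evtInv C).Q.objPreimage R) J).inv) :=
    IsIso.mono_of_iso _
  haveI : Mono (eR.hom) := IsIso.mono_of_iso _
  haveI : HasKernel ((evtInv C).Q.map b ≫ (tauIso _ J).inv) :=
    hasKernel_comp_mono _ _
  haveI : HasKernel (((evtInv C).Q.map b ≫ (tauIso _ J).inv) ≫ eR.hom) :=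
    hasKernel_comp_mono _ _
  exact hasKernel_iso_comp _ _

/-! ### The constant functor preserves kernels -/

instance : (constCauchy C).Additive :=
  ⟨fun {X Y f g} => hom_ext (fun i => rfl)⟩

variable {A B : C}

/-- The levelwise kernel of a constant sequence is the constant sequence on the kernel. -/
noncomputable def constKerIso (f : A ⟶ B) :
    (constCauchy C).obj (kernel f) ≅ Kob ((constCauchy C).map f) where
  hom := ObjectProperty.homMk (show ((constCauchy C).obj (kernel f)).obj ⟶ (Kob ((constCauchy C).map f)).obj from
    { app := fun i => kernel.lift ((nt ((constCauchy C).map f)).app i) (kernel.ι f)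
        (kernel.condition f)
      naturality := fun i i' g => by
        apply equalizer.hom_ext
        simp [Kob, kernelSeq] 
        exact (congrArg (fun z => _ ≫ z) (kernel.lift_ι ((nt ((constCauchy C).map f)).app i') (kernel.ι f) (kernel.condition f))).trans
          ((Category.id_comp (kernel.ι f)).trans ((Category.comp_id (kernel.ι f)).symm.trans
          ((congrArg (fun z => z ≫ _) (kernel.lift_ι ((nt ((constCauchy C).map f)).app i) (kernel.ι f) (kernel.condition f)).symm).trans
          (Category.assoc _ _ _)))) })
  inv := ObjectProperty.homMk (show (Kob ((constCauchy C).map f)).obj ⟶ ((constCauchy C).obj (kernel f)).obj from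
    { app := fun i => kernel.lift f (kernel.ι ((nt ((constCauchy C).map f)).app i))
        (kernel.condition ((nt ((constCauchy C).map f)).app i))
      naturality := fun i i' g => by
        apply equalizer.hom_ext
        simp [Kob, kernelSeq] 
        exact (Category.assoc _ _ _).trans ((congrArg (fun z => _ ≫ z)
          (kernel.lift_ι f (kernel.ι ((nt ((constCauchy C).map f)).app i')) (kernel.condition ((nt ((constCauchy C).map f)).app i')))).trans
          ((kernel.lift_ι ((nt ((constCauchy C).map f)).app i') _ _).trans ((Category.comp_id (kernel.ι ((nt ((constCauchy C).map f)).app i))).trans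
          ((kernel.lift_ι f (kernel.ι ((nt ((constCauchy C).map f)).app i)) (kernel.condition ((nt ((constCauchy C).map f)).app i))).symm.trans
          ((congrArg (fun z => _ ≫ z) (Category.id_comp (kernel.ι f))).symm.trans
          (Category.assoc _ _ _).symm))))) })
  hom_inv_id := by
    apply hom_ext
    intro i
    show kernel.lift ((nt ((constCauchy C).map f)).app i) (kernel.ι f) (kernel.condition f) ≫ kernel.lift f (kernel.ι ((nt ((constCauchy C).map f)).app i)) (kernel.condition ((nt ((constCauchy C).map f)).app i)) = 𝟙 (kernel f)
    apply equalizer.hom_ext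
    exact (Category.assoc _ _ _).trans ((congrArg (fun z => _ ≫ z)
      (kernel.lift_ι f (kernel.ι ((nt ((constCauchy C).map f)).app i)) (kernel.condition ((nt ((constCauchy C).map f)).app i)))).trans
      ((kernel.lift_ι ((nt ((constCauchy C).map f)).app i) (kernel.ι f) (kernel.condition f)).trans (Category.id_comp _).symm))
  inv_hom_id := by
    apply hom_ext
    intro i
    show kernel.lift f (kernel.ι ((nt ((constCauchy C).map f)).app i)) (kernel.condition ((nt ((constCauchy C).map f)).app i)) ≫ kernel.lift ((nt ((constCauchy C).map f)).app i) (kernel.ι f) (kernel.condition f) = 𝟙 _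
    apply equalizer.hom_ext
    exact (Category.assoc _ _ _).trans ((congrArg (fun z => _ ≫ z)
      (kernel.lift_ι ((nt ((constCauchy C).map f)).app i) (kernel.ι f) (kernel.condition f))).trans
      ((kernel.lift_ι f (kernel.ι ((nt ((constCauchy C).map f)).app i)) (kernel.condition ((nt ((constCauchy C).map f)).app i))).trans (Category.id_comp _).symm))

lemma constKerIso_inv_comm (f : A ⟶ B) :
    (constKerIso f).inv ≫ (constCauchy C).map (kernel.ι f) = kι ((constCauchy C).map f) :=
  hom_ext (fun i => kernel.lift_ι f (kernel.ι ((nt ((constCauchy C).map f)).app i)) (kernel.condition ((nt ((constCauchy C).map f)).app i)))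

lemma const_kι_comp (f : A ⟶ B) :
    (evtInv C).Q.map ((constCauchy C).map (kernel.ι f)) ≫
      (evtInv C).Q.map ((constCauchy C).map f) = 0 := by
  rw [← Functor.map_comp, ← Functor.map_comp, kernel.condition, Functor.map_zero,
    Functor.map_zero]

/-- The image of the kernel fork of `f : A ⟶ B` under `C ⥤ Ĉ` is a limit fork. -/
noncomputable def constForkIsLimit (f : A ⟶ B) :
    IsLimit (KernelFork.ofι ((evtInv C).Q.map ((constCauchy C).map (kernel.ι f)))
      (const_kι_comp f)) :=
  IsLimit.ofIsoLimit (kernelForkIsLimit ((constCauchy C).map f))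
    (Fork.ext ((evtInv C).Q.mapIso (constKerIso f).symm) (by
      show (evtInv C).Q.map (constKerIso f).inv ≫ _ = _
      rw [Fork.ι_ofι, Fork.ι_ofι, ← Functor.map_comp, constKerIso_inv_comm]))

lemma preservesKernel_const (f : A ⟶ B) :
    PreservesLimit (parallelPair f 0) (constCauchy C ⋙ (evtInv C).Q) := by
  apply preservesLimit_of_preserves_limit_cone (kernelIsKernel f)
  exact (isLimitMapConeForkEquiv' (constCauchy C ⋙ (evtInv C).Q)
    (kernel.condition f)).symm (constForkIsLimit f)

end Kernels

variable (C)

theorem shat_hasKernels [Preadditive C] [HasFiniteBiproducts C] [HasKernels C] :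
    ∃ (h : Preadditive (Shat C))
      (hk : @HasKernels (Shat C) _ (@Preadditive.preadditiveHasZeroMorphisms _ _ h)),
      -- the canonical functor `C ⥤ Ĉ` is left exact: it preserves kernels
      (∀ {A B : C} (f : A ⟶ B),
        Nonempty (PreservesLimit (parallelPair f 0) (constCauchy C ⋙ (evtInv C).Q))) ∧
      -- the kernel of (the image in `Ĉ` of) a morphism `φ` of Cauchy sequences is the
      -- Cauchy sequence of levelwise kernels
      (∀ {X Y : CauchCat C} (φ : X ⟶ Y),
        ∃ hker : IsCauchy (kernelSeq ((ObjectProperty.ι _).map φ)),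
          Nonempty
            ((@kernel _ _ (@Preadditive.preadditiveHasZeroMorphisms _ _ h) _ _
                ((evtInv C).Q.map φ)
                (@HasKernels.has_limit _ _ _ hk _ _ ((evtInv C).Q.map φ))) ≅
              (evtInv C).Q.obj ⟨kernelSeq ((ObjectProperty.ι _).map φ), hker⟩)) := by
  refine ⟨inferInstance, inferInstance, fun {A B} f => ⟨preservesKernel_const f⟩,
    fun {X Y} φ => ⟨kernelSeq_isCauchy φ, ⟨?_⟩⟩⟩
  exact IsLimit.conePointUniqueUpToIso (limit.isLimit _) (kernelForkIsLimit φ)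

end SeqCompletion
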